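/- arXiv:2007.11612 — 2 statements merged into one kernel-verified Lean document; each statement's English description precedes it below -/
import Mathlib

section
/- Let $f : \mathbb{R}^d \to \mathbb{R}$ be differentiable with $L$-Lipschitz gradient and satisfy strong dissipativity: $\langle x-y, \nabla f(x) - \nabla f(y)\rangle \geq m\|x-y\|^2 - b$ for all $x,y$, with $m, L > 0$, $b \geq 0$. If the step size satisfies $\eta \leq m/L^2$, then the gradient descent map is a semi-contraction: for all $x,y$, $\|(x - \eta\nabla f(x)) - (y - \eta\nabla f(y))\|^2 \leq (1 - m\eta)\|x-y\|^2 + 2\eta b$. -/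
open scoped RealInnerProductSpace

theorem stmt_1 (d : ℕ) (f : EuclideanSpace ℝ (Fin d) → ℝ)
    (f' : EuclideanSpace ℝ (Fin d) → EuclideanSpace ℝ (Fin d))
    (L m b η : ℝ) (hL : 0 < L) (hm : 0 < m) (hb : 0 ≤ b)
    (hgrad : ∀ x, HasGradientAt f (f' x) x)
    (hLip : ∀ x y, ‖f' x - f' y‖ ≤ L * ‖x - y‖)
    (hdiss : ∀ x y, ⟪x - y, f' x - f' y⟫ ≥ m * ‖x - y‖ ^ 2 - b)
    (hη0 : 0 ≤ η) (hη : η ≤ m / L ^ 2) :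
    ∀ x y, ‖(x - η • f' x) - (y - η • f' y)‖ ^ 2 ≤ (1 - m * η) * ‖x - y‖ ^ 2 + 2 * η * b := by
  intro x y
  set u := x - y with hu
  set g := f' x - f' y with hg
  have hrw : (x - η • f' x) - (y - η • f' y) = u - η • g := by
    simp [hu, hg, smul_sub]; abel
  rw [hrw]
  have hexp : ‖u - η • g‖ ^ 2 = ‖u‖ ^ 2 - 2 * η * ⟪u, g⟫ + η ^ 2 * ‖g‖ ^ 2 := by
    rw [norm_sub_sq_real, real_inner_smul_right, norm_smul]
    simp [abs_of_nonneg hη0, mul_pow]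
    ring
  rw [hexp]
  have h1 : ⟪u, g⟫ ≥ m * ‖u‖ ^ 2 - b := hdiss x y
  have h2 : ‖g‖ ≤ L * ‖u‖ := hLip x y
  have hgnn : (0:ℝ) ≤ ‖g‖ := norm_nonneg _
  have h3 : ‖g‖ ^ 2 ≤ L ^ 2 * ‖u‖ ^ 2 := by
    nlinarith [norm_nonneg u]
  have h4 : η * L ^ 2 ≤ m := by
    rcases eq_or_lt_of_le hη0 with h | h
    · nlinarith
    · have := (le_div_iff₀ (by positivity : (0:ℝ) < L ^ 2)).mp hη
      nlinarith
  have h5 : η ^ 2 * ‖g‖ ^ 2 ≤ η * m * ‖u‖ ^ 2 := by nlinarith [mul_le_mul_of_nonneg_left h3 (sq_nonneg η), mul_le_mul_of_nonneg_right (mul_le_mul_of_nonneg_left h4 hη0) (sq_nonneg ‖u‖)]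
  have h6 : η * ⟪u, g⟫ ≥ η * (m * ‖u‖ ^ 2 - b) := mul_le_mul_of_nonneg_left h1 hη0
  nlinarith
end

section
/- Let $f : \mathbb{R}^d \to \mathbb{R}$ be differentiable with $L$-Lipschitz gradient, $\alpha \geq 2$, and let $\nu_* = e^{-f}$ be a probability density. If $\rho_0$ is the density of $\mathcal{N}(0,\sigma^2 I_d)$ with $\sigma^2 < (L+1)^{-1}$, then $\int (\rho_0(x)/\nu_*(x))^\alpha \nu_*(x)\,dx \leq \frac{\exp((\alpha-1)(f(0) + \|\nabla f(0)\|^2/2))}{(2\pi\sigma^2)^{\alpha d/2}} \Big(\frac{2\pi}{\alpha/\sigma^2 - (\alpha-1)(L+1)}\Big)^{d/2}$. -/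
/-!
The descent lemma for the `L`-smooth potential, combined with `⟪∇f 0, x⟫ ≤ (‖∇f 0‖² + ‖x‖²) / 2`,
gives `f x ≤ f 0 + ‖∇f 0‖² / 2 + (L + 1) ‖x‖² / 2`. Since
`(ρ₀ / e^{-f})^α e^{-f} = ρ₀^α e^{(α - 1) f}` and `α ≥ 1`, the integrand is then dominated by a
constant times the Gaussian `exp (-(α / σ² - (α - 1)(L + 1)) ‖x‖² / 2)`, whose integral is explicit.
-/

open MeasureTheory Real

section Descent

variable {E : Type*} [NormedAddCommGroup E] [InnerProductSpace ℝ E] [CompleteSpace E]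
  {f : E → ℝ} {g : E → E}

theorem HasGradientAt.hasDerivAt_comp_add_smul {y v : E} {t : ℝ}
    (h : HasGradientAt f (g (y + t • v)) (y + t • v)) :
    HasDerivAt (fun s : ℝ => f (y + s • v)) (inner ℝ (g (y + t • v)) v) t := by
  have hline : HasDerivAt (fun s : ℝ => y + s • v) v t := by
    simpa using ((hasDerivAt_id t).smul_const v).const_add y
  have hcomp := h.hasFDerivAt.comp_hasDerivAt t hline
  rwa [InnerProductSpace.toDual_apply_apply] at hcomp

theorem le_add_inner_add_mul_norm_sq_of_lipschitz_gradient {L : ℝ}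
    (hgrad : ∀ x, HasGradientAt f (g x) x) (hLip : ∀ x y, ‖g x - g y‖ ≤ L * ‖x - y‖)
    (x y : E) : f x ≤ f y + inner ℝ (g y) (x - y) + L / 2 * ‖x - y‖ ^ 2 := by
  set v := x - y
  -- `φ' t = ⟪g (y + t • v) - g y, v⟫ - L t ‖v‖² ≤ 0`, so `φ 1 ≤ φ 0`.
  set φ : ℝ → ℝ := fun t => f (y + t • v) - t * inner ℝ (g y) v - L / 2 * t ^ 2 * ‖v‖ ^ 2
  have hφ : ∀ t, HasDerivAt φ
      (inner ℝ (g (y + t • v)) v - inner ℝ (g y) v - L * t * ‖v‖ ^ 2) t := by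
    intro t
    have hderiv := (((hgrad (y + t • v)).hasDerivAt_comp_add_smul).sub
      ((hasDerivAt_id t).mul_const (inner ℝ (g y) v))).sub
      (((hasDerivAt_pow 2 t).const_mul (L / 2)).mul_const (‖v‖ ^ 2))
    refine hderiv.congr_deriv ?_
    simp only [one_mul, Nat.add_one_sub_one, pow_one, Nat.cast_ofNat]
    ring
  have hanti : AntitoneOn φ (Set.Icc 0 1) := by
    refine antitoneOn_of_deriv_nonpos (convex_Icc 0 1)
      (fun t _ => (hφ t).continuousAt.continuousWithinAt)
      (fun t _ => (hφ t).differentiableAt.differentiableWithinAt) fun t ht => ?_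
    rw [interior_Icc] at ht
    rw [(hφ t).deriv, ← inner_sub_left, sub_nonpos]
    calc inner ℝ (g (y + t • v) - g y) v ≤ ‖g (y + t • v) - g y‖ * ‖v‖ := real_inner_le_norm _ _
      _ ≤ L * ‖t • v‖ * ‖v‖ := by
          gcongr
          simpa using hLip (y + t • v) y
      _ = L * t * ‖v‖ ^ 2 := by rw [norm_smul, norm_of_nonneg ht.1.le]; ring
  have h01 := hanti (Set.left_mem_Icc.2 zero_le_one) (Set.right_mem_Icc.2 zero_le_one) zero_le_one
  simp only [φ, v, zero_smul, one_smul, add_zero, add_sub_cancel] at h01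
  linarith

theorem le_add_half_norm_sq_add_mul_norm_sq_of_lipschitz_gradient {L : ℝ}
    (hgrad : ∀ x, HasGradientAt f (g x) x) (hLip : ∀ x y, ‖g x - g y‖ ≤ L * ‖x - y‖)
    (x : E) : f x ≤ f 0 + ‖g 0‖ ^ 2 / 2 + (L + 1) / 2 * ‖x‖ ^ 2 := by
  have hdescent := le_add_inner_add_mul_norm_sq_of_lipschitz_gradient hgrad hLip x 0
  have hyoung : 2 * (‖g 0‖ * ‖x‖) ≤ ‖g 0‖ ^ 2 + ‖x‖ ^ 2 := by
    simpa [mul_assoc] using two_mul_le_add_sq ‖g 0‖ ‖x‖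
  rw [sub_zero] at hdescent
  linarith [real_inner_le_norm (g 0) x]

end Descent

theorem div_exp_neg_rpow_mul_exp_neg {a : ℝ} (ha : 0 ≤ a) (t α : ℝ) :
    (a / exp (-t)) ^ α * exp (-t) = a ^ α * exp ((α - 1) * t) := by
  rw [div_rpow ha (exp_pos _).le, ← exp_mul, div_mul_eq_mul_div, div_eq_mul_inv, ← exp_neg,
    mul_assoc, ← exp_add]
  ring_nf

theorem integral_le_mul_of_le_mul_exp_neg_mul_sq_norm {V : Type*} [NormedAddCommGroup V]
    [InnerProductSpace ℝ V] [FiniteDimensional ℝ V] [MeasurableSpace V] [BorelSpace V]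
    {F : V → ℝ} {b C : ℝ} (hb : 0 < b) (hF0 : ∀ x, 0 ≤ F x)
    (hF : ∀ x, F x ≤ C * exp (-b * ‖x‖ ^ 2)) :
    ∫ x, F x ≤ C * (π / b) ^ (Module.finrank ℝ V / 2 : ℝ) := by
  have hgauss := GaussianFourier.integral_rexp_neg_mul_sq_norm (V := V) hb
  have hint : Integrable fun x : V => exp (-b * ‖x‖ ^ 2) :=
    Integrable.of_integral_ne_zero (by rw [hgauss]; positivity)
  calc ∫ x, F x ≤ ∫ x, C * exp (-b * ‖x‖ ^ 2) :=
        integral_mono_of_nonneg (.of_forall hF0) (hint.const_mul C) (.of_forall hF)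
    _ = C * (π / b) ^ (Module.finrank ℝ V / 2 : ℝ) := by rw [integral_const_mul, hgauss]

theorem gaussian_div_exp_neg_rpow_mul_exp_neg_le {s α n r y K M : ℝ} (hs : 0 < s) (hα : 1 ≤ α)
    (hy : y ≤ K + M / 2 * r ^ 2) :
    ((2 * π * s) ^ (-n / 2) * exp (-r ^ 2 / (2 * s)) / exp (-y)) ^ α * exp (-y) ≤
      exp ((α - 1) * K) / (2 * π * s) ^ (α * n / 2) *
        exp (-((α / s - (α - 1) * M) / 2) * r ^ 2) := by
  have hZ : 0 < 2 * π * s := by positivity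
  rw [div_exp_neg_rpow_mul_exp_neg (by positivity), mul_rpow (by positivity) (exp_pos _).le,
    ← rpow_mul hZ.le, ← exp_mul, show -n / 2 * α = -(α * n / 2) by ring, rpow_neg hZ.le,
    mul_assoc, ← exp_add, div_mul_eq_mul_div (exp _), ← exp_add, inv_mul_eq_div]
  gcongr exp ?_ / _
  have hexponent : -((α / s - (α - 1) * M) / 2) * r ^ 2 =
      -r ^ 2 / (2 * s) * α + (α - 1) * (M / 2 * r ^ 2) := by
    field_simp
    ring
  linarith [mul_le_mul_of_nonneg_left hy (by linarith : 0 ≤ α - 1)]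

theorem stmt_9_general (d : ℕ) (f : EuclideanSpace ℝ (Fin d) → ℝ)
    (g : EuclideanSpace ℝ (Fin d) → EuclideanSpace ℝ (Fin d))
    (L α σ2 : ℝ) (hα : 2 ≤ α) (hσ2 : 0 < σ2) (hσ2L : σ2 < (L + 1)⁻¹)
    (hgrad : ∀ x, HasGradientAt f (g x) x)
    (hLip : ∀ x y, ‖g x - g y‖ ≤ L * ‖x - y‖)
    (ρ₀ : EuclideanSpace ℝ (Fin d) → ℝ)
    (hρ₀ : ∀ x, ρ₀ x = (2 * π * σ2) ^ (-(d : ℝ) / 2) * Real.exp (-‖x‖ ^ 2 / (2 * σ2))) :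
    ∫ x : EuclideanSpace ℝ (Fin d), (ρ₀ x / Real.exp (-f x)) ^ α * Real.exp (-f x) ≤
      Real.exp ((α - 1) * (f 0 + ‖g 0‖ ^ 2 / 2)) / (2 * π * σ2) ^ (α * d / 2) *
        (2 * π / (α / σ2 - (α - 1) * (L + 1))) ^ ((d : ℝ) / 2) := by
  set c := α / σ2 - (α - 1) * (L + 1)
  have hc : 0 < c := by
    have hL1 : 0 < L + 1 := inv_pos.1 (hσ2.trans hσ2L)
    have hσ2L' : (L + 1) * σ2 < 1 := by
      simpa [hL1.ne'] using mul_lt_mul_of_pos_left hσ2L hL1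
    have hcσ2 : 0 < c * σ2 := by
      rw [sub_mul, div_mul_cancel₀ _ hσ2.ne']
      nlinarith
    exact pos_of_mul_pos_left hcσ2 hσ2.le
  have hbound : ∀ x, (ρ₀ x / exp (-f x)) ^ α * exp (-f x) ≤
      exp ((α - 1) * (f 0 + ‖g 0‖ ^ 2 / 2)) / (2 * π * σ2) ^ (α * d / 2) *
        exp (-(c / 2) * ‖x‖ ^ 2) := fun x => hρ₀ x ▸
    gaussian_div_exp_neg_rpow_mul_exp_neg_le hσ2 (by linarith)
      (le_add_half_norm_sq_add_mul_norm_sq_of_lipschitz_gradient hgrad hLip x)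
  have hnonneg : ∀ x, 0 ≤ (ρ₀ x / exp (-f x)) ^ α * exp (-f x) := fun x => by
    rw [hρ₀]; positivity
  refine (integral_le_mul_of_le_mul_exp_neg_mul_sq_norm (half_pos hc) hnonneg hbound).trans_eq ?_
  rw [finrank_euclideanSpace_fin, div_div_eq_mul_div, mul_comm π 2]

theorem stmt_9 (d : ℕ) (f : EuclideanSpace ℝ (Fin d) → ℝ)
    (g : EuclideanSpace ℝ (Fin d) → EuclideanSpace ℝ (Fin d))
    (L α σ2 : ℝ) (hL : 0 < L) (hα : 2 ≤ α) (hσ2 : 0 < σ2) (hσ2L : σ2 < (L + 1)⁻¹)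
    (hgrad : ∀ x, HasGradientAt f (g x) x)
    (hLip : ∀ x y, ‖g x - g y‖ ≤ L * ‖x - y‖)
    (hnorm : ∫ x : EuclideanSpace ℝ (Fin d), Real.exp (-f x) = 1)
    (ρ₀ : EuclideanSpace ℝ (Fin d) → ℝ)
    (hρ₀ : ∀ x, ρ₀ x = (2 * π * σ2) ^ (-(d : ℝ) / 2) * Real.exp (-‖x‖ ^ 2 / (2 * σ2))) :
    ∫ x : EuclideanSpace ℝ (Fin d), (ρ₀ x / Real.exp (-f x)) ^ α * Real.exp (-f x) ≤
      Real.exp ((α - 1) * (f 0 + ‖g 0‖ ^ 2 / 2)) / (2 * π * σ2) ^ (α * d / 2) *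
        (2 * π / (α / σ2 - (α - 1) * (L + 1))) ^ ((d : ℝ) / 2) :=
  stmt_9_general d f g L α σ2 hα hσ2 hσ2L hgrad hLip ρ₀ hρ₀
end
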